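/- arXiv:math/0406306 — 5 statements merged into one kernel-verified Lean document; each statement's English description precedes it below -/
import Mathlib

section
/- Asymptotics of Gamma on vertical lines: for fixed real x, |Γ(x + iy)| is asymptotically equivalent to √(2π)·|y|^(x - 1/2)·exp(-π|y|/2) as |y| → ∞, i.e. the ratio of the two sides tends to 1. -/
/-!
Fix `a ≤ b`, let `y → ∞` and put `e t = log ((b + t)² + y²) - log ((a + t)² + y²)`.
Euler's limit formula for `Γ` gives
`2 log ‖Γ(b + iy)‖ - 2 log ‖Γ(a + iy)‖ = lim_n (2 (b - a) log n - ∑_{j ≤ n} e j)`.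
As `|d/ds log (s² + y²)| ≤ 1/y`, we have `|e| ≤ (b - a)/y`; moreover `e` increases
up to `t = y - b` and decreases from `t = y - a` on. So its sums are within `O(1/y)` of its
integrals, and `∫₀ⁿ e = ∫_{a+n}^{b+n} log (s² + y²) ds - ∫_a^b log (s² + y²) ds`, where
the first term cancels `2 (b - a) log n` as `n → ∞` and the second is
`2 (b - a) log y + o(1)`. Hence `‖Γ(b + iy)‖ / ‖Γ(a + iy)‖ ~ y^(b - a)`.
On the line `x = 1/2` the reflection formula gives exactly
`‖Γ(1/2 + iy)‖² = π / cosh (π y)`; `y → -∞` follows from `Γ(conj z) = conj (Γ z)`.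
-/

open Filter Topology Real Finset MeasureTheory intervalIntegral
open scoped Nat

theorem abs_sum_Ico_sub_integral_le_of_monotoneOn {f : ℝ → ℝ} {m n : ℕ} (hmn : m ≤ n)
    (hf : MonotoneOn f (Set.Icc m n)) :
    |∑ i ∈ Ico m n, f i - ∫ x in (m : ℝ)..n, f x| ≤ f n - f m := by
  have hlow := hf.sum_le_integral_Ico hmn
  have hupp := hf.integral_le_sum_Ico hmn
  have htel : ∑ i ∈ Ico m n, f ↑(i + 1) - ∑ i ∈ Ico m n, f i = f n - f m := by
    rw [← sum_sub_distrib]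
    exact sum_Ico_sub (fun i : ℕ => f i) hmn
  rw [abs_le]
  constructor <;> linarith

theorem abs_sum_Ico_sub_integral_le_of_antitoneOn {f : ℝ → ℝ} {m n : ℕ} (hmn : m ≤ n)
    (hf : AntitoneOn f (Set.Icc m n)) :
    |∑ i ∈ Ico m n, f i - ∫ x in (m : ℝ)..n, f x| ≤ f m - f n := by
  have h := abs_sum_Ico_sub_integral_le_of_monotoneOn hmn hf.neg
  rwa [sum_neg_distrib, intervalIntegral.integral_neg, neg_sub_neg, abs_sub_comm, neg_sub_neg]
    at h

theorem abs_sum_Ico_sub_integral_le_of_abs_le {f : ℝ → ℝ} {m n : ℕ} {K : ℝ}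
    (hmn : m ≤ n) (hK : ∀ x ∈ Set.Icc (m : ℝ) n, |f x| ≤ K) :
    |∑ i ∈ Ico m n, f i - ∫ x in (m : ℝ)..n, f x| ≤ 2 * (n - m) * K := by
  have hmn' : (m : ℝ) ≤ n := by exact_mod_cast hmn
  have hsum : |∑ i ∈ Ico m n, f i| ≤ (n - m) * K := by
    calc |∑ i ∈ Ico m n, f i| ≤ ∑ i ∈ Ico m n, |f i| := abs_sum_le_sum_abs _ _
      _ ≤ ∑ _i ∈ Ico m n, K := sum_le_sum fun i hi => by
          obtain ⟨him, hin⟩ := mem_Ico.mp hi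
          exact hK i ⟨by exact_mod_cast him, by exact_mod_cast hin.le⟩
      _ = (n - m) * K := by simp [Nat.cast_sub hmn]
  have hint : |∫ x in (m : ℝ)..n, f x| ≤ (n - m) * K := by
    have := norm_integral_le_of_norm_le_const (a := (m : ℝ)) (b := n) (C := K) (f := f)
      fun x hx => hK x (Set.Ioc_subset_Icc_self (Set.uIoc_of_le hmn' ▸ hx))
    rwa [abs_of_nonneg (sub_nonneg.mpr hmn'), mul_comm] at this
  calc _ ≤ |∑ i ∈ Ico m n, f i| + |∫ x in (m : ℝ)..n, f x| := abs_sub _ _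
    _ ≤ 2 * (n - m) * K := by linarith

theorem abs_sum_range_sub_integral_le_of_monotoneOn_of_antitoneOn {f : ℝ → ℝ} {K : ℝ}
    {p q n : ℕ} (hpq : p ≤ q) (hqn : q ≤ n) (hmono : MonotoneOn f (Set.Icc 0 p))
    (hanti : AntitoneOn f (Set.Icc q n))
    (hint : IntervalIntegrable f volume p q) (hK : ∀ x ∈ Set.Icc (0 : ℝ) n, |f x| ≤ K) :
    |∑ i ∈ range n, f i - ∫ x in (0 : ℝ)..n, f x| ≤ 2 * (q - p + 2) * K := by
  have hp : (p : ℝ) ≤ q := by exact_mod_cast hpq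
  have hq : (q : ℝ) ≤ n := by exact_mod_cast hqn
  have hp0 : (0 : ℝ) ≤ p := p.cast_nonneg
  have hKf : ∀ x ∈ Set.Icc (0 : ℝ) n, f x ≤ K ∧ -K ≤ f x := fun x hx =>
    ⟨(le_abs_self _).trans (hK x hx), neg_le.mp ((neg_le_abs _).trans (hK x hx))⟩
  have h₁ := abs_sum_Ico_sub_integral_le_of_monotoneOn (m := 0) (Nat.zero_le p)
    (by simpa using hmono)
  have h₂ := abs_sum_Ico_sub_integral_le_of_abs_le (f := f) (K := K) hpq
    fun x hx => hK x ⟨hp0.trans hx.1, hx.2.trans hq⟩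
  have h₃ := abs_sum_Ico_sub_integral_le_of_antitoneOn hqn hanti
  have hsum : ∑ i ∈ range n, f i
      = ∑ i ∈ Ico 0 p, f i + ∑ i ∈ Ico p q, f i + ∑ i ∈ Ico q n, f i := by
    rw [sum_Ico_consecutive _ (Nat.zero_le p) hpq, sum_Ico_consecutive _ (Nat.zero_le q) hqn,
      range_eq_Ico]
  have hintegral : ∫ x in (0 : ℝ)..n, f x = (∫ x in (0 : ℝ)..p, f x)
      + (∫ x in (p : ℝ)..q, f x) + ∫ x in (q : ℝ)..n, f x := by
    have i₁ : IntervalIntegrable f volume 0 p :=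
      (Set.uIcc_of_le hp0 ▸ hmono).intervalIntegrable
    have i₃ : IntervalIntegrable f volume q n :=
      (Set.uIcc_of_le hq ▸ hanti).intervalIntegrable
    rw [integral_add_adjacent_intervals i₁ hint,
      integral_add_adjacent_intervals (i₁.trans hint) i₃]
  have e₀ := hKf 0 ⟨le_rfl, by positivity⟩
  have e₁ := hKf p ⟨hp0, hp.trans hq⟩
  have e₂ := hKf q ⟨hp0.trans hp, hq⟩
  have e₃ := hKf n ⟨hp0.trans (hp.trans hq), le_rfl⟩
  rw [hsum, hintegral]
  simp only [Nat.cast_zero] at h₁ h₂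
  rw [abs_le] at h₁ h₂ h₃ ⊢
  constructor <;> linarith

theorem sub_mul_le_integral_of_le {f : ℝ → ℝ} {a b c : ℝ} (hab : a ≤ b)
    (hf : IntervalIntegrable f volume a b) (h : ∀ x ∈ Set.Icc a b, c ≤ f x) :
    (b - a) * c ≤ ∫ x in a..b, f x := by
  simpa using integral_mono_on hab intervalIntegrable_const hf h

theorem integral_le_sub_mul_of_le {f : ℝ → ℝ} {a b c : ℝ} (hab : a ≤ b)
    (hf : IntervalIntegrable f volume a b) (h : ∀ x ∈ Set.Icc a b, f x ≤ c) :
    ∫ x in a..b, f x ≤ (b - a) * c := by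
  simpa using integral_mono_on hab hf intervalIntegrable_const h

theorem tendsto_log_add_sq_add_sub_two_mul_log (c d : ℝ) :
    Tendsto (fun s => log ((c + s) ^ 2 + d) - 2 * log s) atTop (𝓝 0) := by
  have hlim : Tendsto (fun s : ℝ => (c * s⁻¹ + 1) ^ 2 + d * (s⁻¹) ^ 2) atTop (𝓝 1) := by
    have := ((tendsto_inv_atTop_zero.const_mul c).add_const 1).pow 2 |>.add
      ((tendsto_inv_atTop_zero.pow 2).const_mul d)
    simpa using this
  have hlog := (continuousAt_log one_ne_zero).tendsto.comp hlim
  rw [log_one] at hlog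
  refine hlog.congr' ?_
  have hpos : ∀ᶠ s : ℝ in atTop, 0 < (c + s) ^ 2 + d := by
    have : Tendsto (fun s : ℝ => (c + s) ^ 2 + d) atTop atTop :=
      tendsto_atTop_add_const_right _ d
        ((tendsto_pow_atTop two_ne_zero).comp (tendsto_atTop_add_const_left _ c tendsto_id))
    exact this.eventually_gt_atTop 0
  filter_upwards [hpos, eventually_gt_atTop 0] with s hs hs0
  rw [Function.comp_apply, show 2 * log s = log (s ^ 2) by rw [log_pow]; norm_num,
    ← log_div hs.ne' (by positivity)]
  congr 1
  field_simp

theorem Function.Even.tendsto_cocompact {α : Type*} {f : ℝ → α} {l : Filter α}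
    (hf : Function.Even f) (h : Tendsto f atTop l) : Tendsto f (cocompact ℝ) l := by
  rw [cocompact_eq_atBot_atTop, tendsto_sup]
  exact ⟨(h.comp tendsto_neg_atBot_atTop).congr fun y => hf y, h⟩

section LogSqAddSq

variable {y : ℝ}

theorem continuous_log_sq_add_sq (hy : y ≠ 0) : Continuous fun s => log (s ^ 2 + y ^ 2) :=
  (continuous_pow 2 |>.add continuous_const).log fun s => (by positivity : s ^ 2 + y ^ 2 ≠ 0)

theorem hasDerivAt_log_sq_add_sq (hy : y ≠ 0) (s : ℝ) :
    HasDerivAt (fun s => log (s ^ 2 + y ^ 2)) (2 * s / (s ^ 2 + y ^ 2)) s := by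
  have h := ((hasDerivAt_pow 2 s).add_const (y ^ 2)).log (by positivity)
  convert h using 1
  ring

theorem abs_log_sq_add_sq_sub_le (hy : 0 < y) (u v : ℝ) :
    |log (v ^ 2 + y ^ 2) - log (u ^ 2 + y ^ 2)| ≤ |v - u| / y := by
  have hderiv := hasDerivAt_log_sq_add_sq hy.ne'
  have hbound : ∀ s ∈ Set.univ, ‖deriv (fun s => log (s ^ 2 + y ^ 2)) s‖ ≤ 1 / y := by
    intro s _
    rw [(hderiv s).deriv, Real.norm_eq_abs, abs_div, abs_mul, abs_two,
      abs_of_pos (by positivity : 0 < s ^ 2 + y ^ 2), div_le_div_iff₀ (by positivity) hy]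
    nlinarith [sq_nonneg (|s| - y), sq_abs s]
  have := Convex.norm_image_sub_le_of_norm_deriv_le (fun s _ => (hderiv s).differentiableAt)
    hbound convex_univ (Set.mem_univ u) (Set.mem_univ v)
  simpa [div_eq_inv_mul] using this

theorem two_mul_div_sq_add_sq_le_of_mul_le (hy : y ≠ 0) {u v : ℝ} (huv : u ≤ v)
    (h : u * v ≤ y ^ 2) : 2 * u / (u ^ 2 + y ^ 2) ≤ 2 * v / (v ^ 2 + y ^ 2) := by
  rw [div_le_div_iff₀ (by positivity) (by positivity)]
  nlinarith [mul_nonneg (sub_nonneg.mpr huv) (sub_nonneg.mpr h)]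

theorem two_mul_div_sq_add_sq_le_of_le_mul (hy : y ≠ 0) {u v : ℝ} (huv : u ≤ v)
    (h : y ^ 2 ≤ u * v) : 2 * v / (v ^ 2 + y ^ 2) ≤ 2 * u / (u ^ 2 + y ^ 2) := by
  rw [div_le_div_iff₀ (by positivity) (by positivity)]
  nlinarith [mul_nonneg (sub_nonneg.mpr huv) (sub_nonneg.mpr h)]

variable {a b : ℝ}

theorem hasDerivAt_log_sq_add_sq_sub (hy : y ≠ 0) (t : ℝ) :
    HasDerivAt (fun t => log ((b + t) ^ 2 + y ^ 2) - log ((a + t) ^ 2 + y ^ 2))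
      (2 * (b + t) / ((b + t) ^ 2 + y ^ 2) - 2 * (a + t) / ((a + t) ^ 2 + y ^ 2)) t := by
  have hb := (hasDerivAt_log_sq_add_sq hy (b + t)).comp t ((hasDerivAt_id t).const_add b)
  have ha := (hasDerivAt_log_sq_add_sq hy (a + t)).comp t ((hasDerivAt_id t).const_add a)
  rw [mul_one] at hb ha
  exact hb.sub ha

theorem monotoneOn_log_sq_add_sq_sub (hab : a ≤ b) (hy : 0 < y) :
    MonotoneOn (fun t => log ((b + t) ^ 2 + y ^ 2) - log ((a + t) ^ 2 + y ^ 2))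
      (Set.Icc (-y - a) (y - b)) := by
  have hderiv := hasDerivAt_log_sq_add_sq_sub (a := a) (b := b) hy.ne'
  refine monotoneOn_of_deriv_nonneg (convex_Icc _ _)
    (fun t _ => (hderiv t).continuousAt.continuousWithinAt)
    (fun t _ => (hderiv t).differentiableAt.differentiableWithinAt) fun t ht => ?_
  rw [interior_Icc] at ht
  rw [(hderiv t).deriv, sub_nonneg]
  refine two_mul_div_sq_add_sq_le_of_mul_le hy.ne' (by linarith) ?_
  nlinarith [mul_nonneg (by linarith [ht.2] : 0 ≤ y - (b + t))
    (by linarith [ht.1] : 0 ≤ y + (a + t))]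

theorem antitoneOn_log_sq_add_sq_sub (hab : a ≤ b) (hy : 0 < y) :
    AntitoneOn (fun t => log ((b + t) ^ 2 + y ^ 2) - log ((a + t) ^ 2 + y ^ 2))
      (Set.Ici (y - a)) := by
  have hderiv := hasDerivAt_log_sq_add_sq_sub (a := a) (b := b) hy.ne'
  refine antitoneOn_of_deriv_nonpos (convex_Ici _)
    (fun t _ => (hderiv t).continuousAt.continuousWithinAt)
    (fun t _ => (hderiv t).differentiableAt.differentiableWithinAt) fun t ht => ?_
  rw [interior_Ici] at ht
  rw [(hderiv t).deriv, sub_nonpos]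
  refine two_mul_div_sq_add_sq_le_of_le_mul hy.ne' (by linarith) ?_
  have ht' : y ≤ a + t := by linarith [Set.mem_Ioi.mp ht]
  nlinarith

theorem integral_log_sq_add_sq_sub (hy : y ≠ 0) (m : ℝ) :
    ∫ t in (0 : ℝ)..m, (log ((b + t) ^ 2 + y ^ 2) - log ((a + t) ^ 2 + y ^ 2))
      = (∫ s in (a + m)..(b + m), log (s ^ 2 + y ^ 2)) - ∫ s in a..b, log (s ^ 2 + y ^ 2) := by
  have hL := continuous_log_sq_add_sq hy
  have hint : ∀ c d : ℝ, IntervalIntegrable (fun s => log (s ^ 2 + y ^ 2)) volume c d :=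
    fun c d => hL.intervalIntegrable c d
  have hshift : ∀ c : ℝ, ∫ t in (0 : ℝ)..m, log ((c + t) ^ 2 + y ^ 2)
      = ∫ s in c..c + m, log (s ^ 2 + y ^ 2) := fun c => by
    simpa using integral_comp_add_left (fun s => log (s ^ 2 + y ^ 2)) c (a := 0) (b := m)
  have hint' : ∀ c : ℝ, IntervalIntegrable (fun t => log ((c + t) ^ 2 + y ^ 2)) volume 0 m :=
    fun c => (hL.comp (continuous_const_add c)).intervalIntegrable 0 m
  rw [integral_sub (hint' b) (hint' a), hshift, hshift,
    integral_interval_sub_interval_comm' (hint _ _) (hint _ _) (hint _ _)]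

theorem integral_log_sq_add_sq_mem_Icc (hy : y ≠ 0) (hab : a ≤ b) :
    ∫ s in a..b, log (s ^ 2 + y ^ 2) ∈
      Set.Icc ((b - a) * log (y ^ 2)) ((b - a) * log (a ^ 2 + b ^ 2 + y ^ 2)) := by
  have hint := (continuous_log_sq_add_sq hy).intervalIntegrable (μ := volume) a b
  refine ⟨sub_mul_le_integral_of_le hab hint fun s _ => ?_,
    integral_le_sub_mul_of_le hab hint fun s hs => ?_⟩
  · exact log_le_log (by positivity) (by nlinarith)
  · refine log_le_log (by positivity) ?_
    rcases le_total 0 s with h | h <;> nlinarith [hs.1, hs.2]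

theorem integral_log_sq_add_sq_mem_Icc_of_nonneg (hy : y ≠ 0) (ha : 0 ≤ a) (hab : a ≤ b) :
    ∫ s in a..b, log (s ^ 2 + y ^ 2) ∈
      Set.Icc ((b - a) * log (a ^ 2 + y ^ 2)) ((b - a) * log (b ^ 2 + y ^ 2)) := by
  have hint := (continuous_log_sq_add_sq hy).intervalIntegrable (μ := volume) a b
  refine ⟨sub_mul_le_integral_of_le hab hint fun s hs => ?_,
    integral_le_sub_mul_of_le hab hint fun s hs => ?_⟩
  · exact log_le_log (by positivity) (by nlinarith [hs.1])
  · exact log_le_log (by positivity) (by nlinarith [hs.1, hs.2])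

end LogSqAddSq

theorem Gamma_ofReal_add_mul_I_ne_zero (x : ℝ) {y : ℝ} (hy : y ≠ 0) :
    Complex.Gamma (x + y * Complex.I) ≠ 0 :=
  Complex.Gamma_ne_zero fun m h => hy (by simpa using congrArg Complex.im h)

theorem norm_Gamma_conj (z : ℂ) :
    ‖Complex.Gamma ((starRingEnd ℂ) z)‖ = ‖Complex.Gamma z‖ := by
  rw [Complex.Gamma_conj, Complex.norm_conj]

theorem two_mul_log_norm_ofReal_add_mul_I (u v : ℝ) :
    2 * log ‖(u + v * Complex.I : ℂ)‖ = log (u ^ 2 + v ^ 2) := by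
  rw [Complex.norm_add_mul_I, log_sqrt (by positivity)]
  ring

theorem two_mul_log_norm_GammaSeq (c : ℝ) {y : ℝ} (hy : y ≠ 0) {n : ℕ} (hn : n ≠ 0) :
    2 * log ‖Complex.GammaSeq (c + y * Complex.I) n‖
      = 2 * c * log n + 2 * log n ! - ∑ j ∈ range (n + 1), log ((c + j) ^ 2 + y ^ 2) := by
  have hfac : ∀ j : ℕ, ‖(c + y * Complex.I : ℂ) + j‖ ≠ 0 := fun j =>
    norm_ne_zero_iff.mpr fun h => hy (by simpa using congrArg Complex.im h)
  have hn' : (0 : ℝ) < n := by positivity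
  rw [Complex.GammaSeq, norm_div, norm_mul, Complex.norm_natCast_cpow_of_pos (by omega),
    norm_prod, Complex.norm_natCast,
    log_div (by positivity) (prod_ne_zero_iff.mpr fun j _ => hfac j),
    log_mul (by positivity) (by positivity), log_rpow hn', log_prod fun j _ => hfac j, mul_sub,
    mul_add, mul_sum]
  congr 1
  · simp [mul_assoc]
  · refine sum_congr rfl fun j _ => ?_
    rw [← two_mul_log_norm_ofReal_add_mul_I]
    congr 3
    push_cast
    ring

theorem tendsto_sub_sum_log_sq_add_sq (a b : ℝ) {y : ℝ} (hy : y ≠ 0) :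
    Tendsto (fun n : ℕ => 2 * (b - a) * log n
        - ∑ j ∈ range (n + 1), (log ((b + j) ^ 2 + y ^ 2) - log ((a + j) ^ 2 + y ^ 2)))
      atTop (𝓝 (2 * (log ‖Complex.Gamma (b + y * Complex.I)‖
        - log ‖Complex.Gamma (a + y * Complex.I)‖))) := by
  have hlog : ∀ c : ℝ, Tendsto (fun n => 2 * log ‖Complex.GammaSeq (c + y * Complex.I) n‖)
      atTop (𝓝 (2 * log ‖Complex.Gamma (c + y * Complex.I)‖)) := fun c =>
    ((continuousAt_log (norm_ne_zero_iff.mpr (Gamma_ofReal_add_mul_I_ne_zero c hy))).tendsto.comp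
      ((continuous_norm.tendsto _).comp (Complex.GammaSeq_tendsto_Gamma _))).const_mul 2
  have hsub := (hlog b).sub (hlog a)
  rw [← mul_sub] at hsub
  refine hsub.congr' ?_
  filter_upwards [eventually_ne_atTop 0] with n hn
  rw [two_mul_log_norm_GammaSeq b hy hn, two_mul_log_norm_GammaSeq a hy hn, sum_sub_distrib]
  ring

theorem tendsto_two_mul_log_sub_integral_log_sq_add_sq {a b y : ℝ} (hab : a ≤ b)
    (hy : y ≠ 0) :
    Tendsto (fun n : ℕ => 2 * (b - a) * log n
      - ∫ s in (a + ↑(n + 1))..(b + ↑(n + 1)), log (s ^ 2 + y ^ 2)) atTop (𝓝 0) := by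
  have hlim (c : ℝ) : Tendsto
      (fun n : ℕ => (b - a) * (2 * log n - log ((c + ↑(n + 1)) ^ 2 + y ^ 2))) atTop (𝓝 0) := by
    have := ((tendsto_log_add_sq_add_sub_two_mul_log (c + 1) (y ^ 2)).comp
      tendsto_natCast_atTop_atTop).neg.const_mul (b - a)
    simp only [neg_zero, mul_zero] at this
    refine this.congr fun n => ?_
    simp only [Function.comp_apply]
    push_cast
    ring_nf
  refine tendsto_of_tendsto_of_tendsto_of_le_of_le' (hlim b) (hlim a) ?_ ?_
  all_goals
    filter_upwards [eventually_ge_atTop ⌈-a⌉₊] with n hn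
    have ha : 0 ≤ a + ↑(n + 1) := by
      have := (Nat.ceil_le.mp hn)
      push_cast
      linarith
    have h := integral_log_sq_add_sq_mem_Icc_of_nonneg hy ha
      (by linarith : a + ↑(n + 1) ≤ b + ↑(n + 1))
    simp only [add_sub_add_right_eq_sub] at h
  · linarith [h.2]
  · linarith [h.1]

theorem abs_sum_range_sub_integral_log_sq_add_sq_sub_le {a b y : ℝ} (hab : a ≤ b) (hy : 0 < y)
    (hay : -a ≤ y) (hby : b ≤ y) {n : ℕ} (hn : ⌈y - a⌉₊ ≤ n) :
    |∑ i ∈ range n, (log ((b + i) ^ 2 + y ^ 2) - log ((a + i) ^ 2 + y ^ 2))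
      - ∫ t in (0 : ℝ)..n, (log ((b + t) ^ 2 + y ^ 2) - log ((a + t) ^ 2 + y ^ 2))|
      ≤ 2 * (b - a + 4) * ((b - a) / y) := by
  set e : ℝ → ℝ := fun t => log ((b + t) ^ 2 + y ^ 2) - log ((a + t) ^ 2 + y ^ 2)
  set p := ⌊y - b⌋₊
  set q := ⌈y - a⌉₊
  have hpq : p ≤ q := (Nat.floor_le_floor (by linarith)).trans (Nat.floor_le_ceil _)
  have hqp : (q : ℝ) - p ≤ b - a + 2 := by
    have := Nat.sub_one_lt_floor (y - b)
    have := Nat.ceil_lt_add_one (by linarith : 0 ≤ y - a)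
    linarith
  have hmono : MonotoneOn e (Set.Icc 0 p) :=
    (monotoneOn_log_sq_add_sq_sub hab hy).mono fun t ht =>
      ⟨by linarith [ht.1], ht.2.trans (Nat.floor_le (by linarith))⟩
  have hanti : AntitoneOn e (Set.Icc q n) :=
    (antitoneOn_log_sq_add_sq_sub hab hy).mono fun t ht => (Nat.le_ceil _).trans ht.1
  have hcont : Continuous e :=
    ((continuous_log_sq_add_sq hy.ne').comp (continuous_const_add b)).sub
      ((continuous_log_sq_add_sq hy.ne').comp (continuous_const_add a))
  have hK : ∀ t, |e t| ≤ (b - a) / y := fun t => by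
    have := abs_log_sq_add_sq_sub_le hy (a + t) (b + t)
    rwa [add_sub_add_right_eq_sub, abs_of_nonneg (sub_nonneg.mpr hab)] at this
  refine (abs_sum_range_sub_integral_le_of_monotoneOn_of_antitoneOn hpq hn hmono hanti
    (hcont.intervalIntegrable _ _) fun t _ => hK t).trans ?_
  exact mul_le_mul_of_nonneg_right (by linarith) (div_nonneg (sub_nonneg.mpr hab) hy.le)

theorem abs_two_mul_log_norm_Gamma_sub_sub_integral_le {a b y : ℝ} (hab : a ≤ b) (hy : 0 < y)
    (hay : -a ≤ y) (hby : b ≤ y) :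
    |2 * (log ‖Complex.Gamma (b + y * Complex.I)‖ - log ‖Complex.Gamma (a + y * Complex.I)‖)
      - ∫ s in a..b, log (s ^ 2 + y ^ 2)| ≤ 2 * (b - a + 4) * ((b - a) / y) := by
  have hlim := ((tendsto_sub_sum_log_sq_add_sq a b hy.ne').sub_const
    (∫ s in a..b, log (s ^ 2 + y ^ 2))).sub
    (tendsto_two_mul_log_sub_integral_log_sq_add_sq hab hy.ne')
  rw [sub_zero] at hlim
  refine le_of_tendsto ((continuous_abs.tendsto _).comp hlim) ?_
  filter_upwards [eventually_ge_atTop ⌈y - a⌉₊] with n hn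
  have := abs_sum_range_sub_integral_log_sq_add_sq_sub_le hab hy hay hby (Nat.le_succ_of_le hn)
  rw [integral_log_sq_add_sq_sub hy.ne', abs_sub_comm] at this
  refine le_of_eq_of_le ?_ this
  simp only [Function.comp_apply]
  congr 1
  ring

theorem tendsto_integral_log_sq_add_sq_sub_two_mul_log {a b : ℝ} (hab : a ≤ b) :
    Tendsto (fun y => (∫ s in a..b, log (s ^ 2 + y ^ 2)) - 2 * (b - a) * log y) atTop
      (𝓝 0) := by
  have hupp : Tendsto (fun y => (b - a) * (log (a ^ 2 + b ^ 2 + y ^ 2) - 2 * log y)) atTop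
      (𝓝 0) := by
    simpa [add_comm] using (tendsto_log_add_sq_add_sub_two_mul_log 0 (a ^ 2 + b ^ 2)).const_mul
      (b - a)
  refine tendsto_of_tendsto_of_tendsto_of_le_of_le' tendsto_const_nhds hupp ?_ ?_
  all_goals
    filter_upwards [eventually_gt_atTop 0] with y hy
    have h := integral_log_sq_add_sq_mem_Icc hy.ne' hab
    rw [log_pow] at h
    push_cast at h
  · linarith [h.1]
  · linarith [h.2]

theorem tendsto_log_norm_Gamma_sub_log_norm_Gamma_of_le {a b : ℝ} (hab : a ≤ b) :
    Tendsto (fun y : ℝ => log ‖Complex.Gamma (b + y * Complex.I)‖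
      - log ‖Complex.Gamma (a + y * Complex.I)‖ - (b - a) * log y) atTop (𝓝 0) := by
  have hdiff : Tendsto (fun y : ℝ => 2 * (log ‖Complex.Gamma (b + y * Complex.I)‖
      - log ‖Complex.Gamma (a + y * Complex.I)‖) - ∫ s in a..b, log (s ^ 2 + y ^ 2)) atTop
      (𝓝 0) := by
    refine squeeze_zero_norm' ?_ ((tendsto_const_nhds (x := 2 * (b - a + 4) * (b - a))).div_atTop
      tendsto_id)
    filter_upwards [eventually_gt_atTop 0, eventually_ge_atTop (-a), eventually_ge_atTop b]
      with y hy hay hby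
    rw [Real.norm_eq_abs, id, mul_div_assoc]
    exact abs_two_mul_log_norm_Gamma_sub_sub_integral_le hab hy hay hby
  have := (hdiff.add (tendsto_integral_log_sq_add_sq_sub_two_mul_log hab)).div_const 2
  simp only [add_zero, zero_div] at this
  refine this.congr fun y => ?_
  ring

theorem tendsto_log_norm_Gamma_sub_log_norm_Gamma (a b : ℝ) :
    Tendsto (fun y : ℝ => log ‖Complex.Gamma (b + y * Complex.I)‖
      - log ‖Complex.Gamma (a + y * Complex.I)‖ - (b - a) * log y) atTop (𝓝 0) := by
  rcases le_total a b with hab | hba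
  · exact tendsto_log_norm_Gamma_sub_log_norm_Gamma_of_le hab
  · have h := (tendsto_log_norm_Gamma_sub_log_norm_Gamma_of_le hba).neg
    rw [neg_zero] at h
    exact h.congr fun y => by ring

theorem norm_Gamma_one_half_add_mul_I_sq (y : ℝ) :
    ‖Complex.Gamma (1 / 2 + y * Complex.I)‖ ^ 2 = π / cosh (π * y) := by
  set z : ℂ := 1 / 2 + y * Complex.I
  have hconj : 1 - z = (starRingEnd ℂ) z := by
    apply Complex.ext <;> norm_num [z]
  have hsin : Complex.sin (π * z) = (cosh (π * y) : ℝ) := by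
    rw [show (π : ℂ) * z = π / 2 + (π * y : ℝ) * Complex.I by push_cast [z]; ring,
      Complex.sin_add, Complex.sin_pi_div_two, Complex.cos_pi_div_two, Complex.cos_mul_I,
      ← Complex.ofReal_cosh]
    ring
  have h := Complex.Gamma_mul_Gamma_one_sub z
  rw [hconj, Complex.Gamma_conj, Complex.mul_conj, Complex.normSq_eq_norm_sq, hsin,
    ← Complex.ofReal_div] at h
  exact_mod_cast h

theorem tendsto_log_norm_Gamma_one_half_add_mul_I :
    Tendsto (fun y : ℝ => log ‖Complex.Gamma (1 / 2 + y * Complex.I)‖ + π * y / 2) atTop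
      (𝓝 (log √(2 * π))) := by
  have hexp : Tendsto (fun y : ℝ => log (1 + exp (-(2 * (π * y))))) atTop (𝓝 0) := by
    have : Tendsto (fun y : ℝ => 1 + exp (-(2 * (π * y)))) atTop (𝓝 1) := by
      simpa using (tendsto_exp_atBot.comp (tendsto_neg_atTop_atBot.comp
        ((tendsto_id.const_mul_atTop pi_pos).const_mul_atTop two_pos))).const_add 1
    rw [← log_one]
    exact (continuousAt_log one_ne_zero).tendsto.comp this
  have hlim := (hexp.const_mul (-(1 / 2))).const_add (log √(2 * π))
  rw [mul_zero, add_zero] at hlim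
  refine hlim.congr fun y => ?_
  have hnorm :
      2 * log ‖Complex.Gamma (1 / 2 + y * Complex.I)‖ = log π - log (cosh (π * y)) := by
    rw [← log_div pi_ne_zero (cosh_pos _).ne', ← norm_Gamma_one_half_add_mul_I_sq, log_pow]
    push_cast
    ring
  have hcosh : cosh (π * y) = exp (π * y) * (1 + exp (-(2 * (π * y)))) / 2 := by
    rw [cosh_eq, mul_add, mul_one, ← exp_add]
    ring_nf
  rw [hcosh, log_div (by positivity) two_ne_zero, log_mul (by positivity) (by positivity),
    log_exp] at hnorm
  rw [log_sqrt (by positivity), log_mul two_ne_zero pi_ne_zero]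
  linarith

theorem tendsto_norm_Gamma_div_atTop (x : ℝ) :
    Tendsto (fun y : ℝ => ‖Complex.Gamma (x + y * Complex.I)‖ /
      (√(2 * π) * y ^ (x - 1 / 2) * exp (-π * y / 2))) atTop (𝓝 1) := by
  have hlog := (tendsto_log_norm_Gamma_sub_log_norm_Gamma (1 / 2) x).add
    (tendsto_log_norm_Gamma_one_half_add_mul_I.sub_const (log √(2 * π)))
  rw [sub_self, add_zero] at hlog
  push_cast at hlog
  have hexp := (continuous_exp.tendsto 0).comp hlog
  rw [exp_zero] at hexp
  refine hexp.congr' ?_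
  filter_upwards [eventually_gt_atTop 0] with y hy
  have hΓ := norm_pos_iff.mpr (Gamma_ofReal_add_mul_I_ne_zero x hy.ne')
  rw [Function.comp_apply,
    ← exp_log (x := ‖Complex.Gamma (x + y * Complex.I)‖ / _) (by positivity),
    log_div hΓ.ne' (by positivity), log_mul (by positivity) (by positivity),
    log_mul (by positivity) (by positivity), log_rpow hy, log_exp]
  ring_nf

theorem gamma_vertical_asymptotics (x : ℝ) :
    Tendsto (fun y : ℝ =>
        ‖Complex.Gamma (x + y * Complex.I)‖ /
          (Real.sqrt (2 * Real.pi) * |y| ^ (x - 1 / 2) * Real.exp (-Real.pi * |y| / 2)))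
      (cocompact ℝ) (𝓝 1) := by
  refine Function.Even.tendsto_cocompact (fun y => ?_) ((tendsto_norm_Gamma_div_atTop x).congr' ?_)
  · have hconj : (x + (-y : ℝ) * Complex.I : ℂ) = (starRingEnd ℂ) (x + y * Complex.I) := by
      apply Complex.ext <;> simp
    rw [hconj, norm_Gamma_conj, abs_neg]
  · filter_upwards [eventually_gt_atTop 0] with y hy
    rw [abs_of_pos hy]
end

section
/- For quaternions p and q with p' := p - Re(p) and q' := q - Re(q) purely imaginary, and q' decomposed as q' = q'₁ + q'₂ with q'₁ parallel to p' and q'₂ orthogonal to p' (with respect to the inner product (z,η) := Re(z·conj(η))), the commutator of powers satisfies, for each 0 < t < 1: [t^(p-1), (1-t)^(q-1)] = t^(p-1)(1-t)^(q-1) - (1-t)^(q-1)t^(p-1) = 2·t^(Re(p)-1)·(1-t)^(Re(q)-1) · (sin|p'·log t| / |p'·log t|) · (sin|q'·log(1-t)| / |q'·log(1-t)|) · (p'·log t)·(q'₂·log(1-t)), provided p'·log t ≠ 0 and q'·log(1-t) ≠ 0. -/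
open Quaternion NormedSpace

/-! With `P = p' log t`, `Q = q' log(1-t)`, `θ = |P|`, `φ = |Q|`, the quaternionic exponential gives
`t^(p-1) = t^(Re p - 1) (cos θ + (sin θ / θ) P)` and likewise for `(1-t)^(q-1)`. Real parts are
central, so the commutator is `t^(Re p - 1) (1-t)^(Re q - 1) (sin θ / θ)(sin φ / φ) (PQ - QP)`.
The part of `Q` parallel to `P` commutes with `P`, while orthogonal pure imaginary quaternions
anticommute, so `PQ - QP = 2 P q'₂ log(1-t)`. -/

namespace Quaternion

theorem exp_mul_coe_log (z : ℍ[ℝ]) {t : ℝ} (ht : 0 < t) :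
    exp (z * (Real.log t : ℍ[ℝ])) =
      t ^ z.re • ((Real.cos ‖Real.log t • z.im‖ : ℍ[ℝ]) +
        (Real.sin ‖Real.log t • z.im‖ / ‖Real.log t • z.im‖) • (Real.log t • z.im)) := by
  rw [mul_coe_eq_smul, exp_eq, Quaternion.re_smul, Quaternion.im_smul, ← Real.exp_eq_exp_ℝ,
    smul_eq_mul, ← Real.rpow_def_of_pos ht]

theorem commutator_smul_coe_add_smul (P Q : ℍ[ℝ]) (a b c₁ c₂ s₁ s₂ : ℝ) :
    (a • ((c₁ : ℍ[ℝ]) + s₁ • P)) * (b • ((c₂ : ℍ[ℝ]) + s₂ • Q)) -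
        (b • ((c₂ : ℍ[ℝ]) + s₂ • Q)) * (a • ((c₁ : ℍ[ℝ]) + s₁ • P)) =
      (a * b * s₁ * s₂) • (P * Q - Q * P) := by
  have coe_eq_smul_one (r : ℝ) : (r : ℍ[ℝ]) = r • 1 := by rw [← coe_mul_eq_smul, mul_one]
  simp only [coe_eq_smul_one, smul_add, smul_smul, mul_add, add_mul, smul_mul_smul_comm,
    one_mul, mul_one]
  module

theorem mul_comm_eq_neg_of_inner_eq_zero {x y : ℍ[ℝ]} (hx : x.re = 0) (hy : y.re = 0)
    (hxy : inner ℝ x y = 0) : y * x = -(x * y) := by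
  rw [inner_def] at hxy
  ext <;> simp [re_mul, imI_mul, imJ_mul, imK_mul, hx, hy] at hxy ⊢ <;> linarith

end Quaternion

theorem commutator_smul_add_of_anticommute {R A : Type*} [CommRing R] [Ring A] [Algebra R A]
    {x y : A} (hxy : y * x = -(x * y)) (a b c : R) :
    (a • x) * (b • (c • x + y)) - (b • (c • x + y)) * (a • x) = (2 : R) • ((a • x) * (b • y)) := by
  simp only [smul_add, smul_smul, add_mul, mul_add, smul_mul_smul_comm, hxy]
  module

theorem commutator_of_quaternion_powers_general (p q p' q' q1 q2 : ℍ[ℝ])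
    (hp' : p' = p - ((p.re : ℝ) : ℍ[ℝ])) (hq' : q' = q - ((q.re : ℝ) : ℍ[ℝ]))
    (hdec : q' = q1 + q2) (hpar : ∃ c : ℝ, q1 = c • p')
    (horth : (q2 * star p').re = 0)
    (t : ℝ) (ht0 : 0 < t) (ht1 : t < 1) :
    exp ((p - 1) * ((Real.log t : ℝ) : ℍ[ℝ])) *
          exp ((q - 1) * ((Real.log (1 - t) : ℝ) : ℍ[ℝ])) -
        exp ((q - 1) * ((Real.log (1 - t) : ℝ) : ℍ[ℝ])) *
          exp ((p - 1) * ((Real.log t : ℝ) : ℍ[ℝ])) =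
      (2 * t ^ (p.re - 1) * (1 - t) ^ (q.re - 1) *
          (Real.sin ‖Real.log t • p'‖ / ‖Real.log t • p'‖) *
          (Real.sin ‖Real.log (1 - t) • q'‖ / ‖Real.log (1 - t) • q'‖)) •
        ((Real.log t • p') * (Real.log (1 - t) • q2)) := by
  obtain ⟨c, rfl⟩ := hpar
  rw [sub_re_self] at hp' hq'
  subst hp' hq'
  have hq2 : q2.re = 0 := by simpa using congrArg QuaternionAlgebra.re hdec.symm
  have hanti : q2 * p.im = -(p.im * q2) :=
    mul_comm_eq_neg_of_inner_eq_zero (re_im p) hq2 (by rwa [real_inner_comm, inner_def])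
  rw [exp_mul_coe_log _ ht0, exp_mul_coe_log _ (sub_pos.2 ht1), commutator_smul_coe_add_smul]
  simp only [re_sub, re_one, im_sub, im_one, sub_zero, hdec,
    commutator_smul_add_of_anticommute hanti]
  match_scalars
  ring

theorem commutator_of_quaternion_powers (p q p' q' q1 q2 : ℍ[ℝ])
    (hp' : p' = p - ((p.re : ℝ) : ℍ[ℝ])) (hq' : q' = q - ((q.re : ℝ) : ℍ[ℝ]))
    (hdec : q' = q1 + q2) (hpar : ∃ c : ℝ, q1 = c • p')
    (horth : (q2 * star p').re = 0)
    (t : ℝ) (ht0 : 0 < t) (ht1 : t < 1)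
    (hpt : Real.log t • p' ≠ 0) (hqt : Real.log (1 - t) • q' ≠ 0) :
    exp ((p - 1) * ((Real.log t : ℝ) : ℍ[ℝ])) *
          exp ((q - 1) * ((Real.log (1 - t) : ℝ) : ℍ[ℝ])) -
        exp ((q - 1) * ((Real.log (1 - t) : ℝ) : ℍ[ℝ])) *
          exp ((p - 1) * ((Real.log t : ℝ) : ℍ[ℝ])) =
      (2 * t ^ (p.re - 1) * (1 - t) ^ (q.re - 1) *
          (Real.sin ‖Real.log t • p'‖ / ‖Real.log t • p'‖) *
          (Real.sin ‖Real.log (1 - t) • q'‖ / ‖Real.log (1 - t) • q'‖)) •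
        ((Real.log t • p') * (Real.log (1 - t) • q2)) :=
  commutator_of_quaternion_powers_general p q p' q' q1 q2 hp' hq' hdec hpar horth t ht0 ht1
end

section
/- For purely imaginary quaternions M and N with M parallel-orthogonal decomposition N = N₁ + N₂ relative to M (N₁ ∈ ℝM, N₂ ⟂ M), one has exp(N)·exp(M) = cos|M|·exp(N) + (sin|M|/|M|)·M·exp(N₁ - N₂) when M ≠ 0. -/
/-!
An imaginary `M` commutes with `N₁ ∈ ℝM` and anticommutes with the imaginary `N₂ ⟂ M`, so
`(N₁ + N₂) M = M (N₁ - N₂)`; this semiconjugacy passes to the exponential series, giving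
`exp N · M = M · exp (N₁ - N₂)`. Expanding `exp M = cos ‖M‖ + (sin ‖M‖ / ‖M‖) M` finishes.
-/

open Quaternion NormedSpace

namespace Quaternion

variable {R : Type*} [CommRing R]

theorem mul_add_mul_swap_of_re_eq_zero {p q : ℍ[R]} (hp : p.re = 0) (hq : q.re = 0) :
    p * q + q * p = ((2 * (p * q).re : R) : ℍ[R]) := by
  ext <;> simp [hp, hq] <;> ring

theorem mul_eq_neg_mul_of_re_mul_eq_zero {p q : ℍ[R]} (hp : p.re = 0) (hq : q.re = 0)
    (h : (p * q).re = 0) : p * q = -(q * p) :=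
  eq_neg_of_add_eq_zero_left <| by simp [mul_add_mul_swap_of_re_eq_zero hp hq, h]

theorem semiconjBy_sub_add_of_re_mul_star_eq_zero {M N₁ N₂ : ℍ[R]} (hM : M.re = 0)
    (hN₂ : N₂.re = 0) (hpar : ∃ c : R, N₁ = c • M) (horth : (N₂ * star M).re = 0) :
    SemiconjBy M (N₁ - N₂) (N₁ + N₂) := by
  obtain ⟨c, rfl⟩ := hpar
  have hN₂M : (N₂ * M).re = 0 := by
    simp only [re_mul, re_star, imI_star, imJ_star, imK_star, hM] at horth ⊢
    linear_combination -horth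
  rw [SemiconjBy, add_mul, mul_eq_neg_mul_of_re_mul_eq_zero hN₂ hM hN₂M, mul_sub,
    smul_mul_assoc, mul_smul_comm, sub_eq_add_neg]

end Quaternion

theorem exp_mul_exp_of_imaginary_general (M N N1 N2 : ℍ[ℝ])
    (hM : M.re = 0) (hN : N.re = 0)
    (hdec : N = N1 + N2) (hpar : ∃ c : ℝ, N1 = c • M)
    (horth : (N2 * star M).re = 0) :
    NormedSpace.exp N * NormedSpace.exp M =
      Real.cos ‖M‖ • NormedSpace.exp N +
        (Real.sin ‖M‖ / ‖M‖) • (M * NormedSpace.exp (N1 - N2)) := by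
  have hN2 : N2.re = 0 := by
    obtain ⟨c, rfl⟩ := hpar
    simpa [hM, hN] using (congr_arg (·.re) hdec).symm
  -- `SemiconjBy.exp_right` is stated for normed `ℚ`-algebras.
  let _ : NormedAlgebra ℚ ℍ[ℝ] := NormedAlgebra.restrictScalars ℚ ℝ ℍ[ℝ]
  have hconj : SemiconjBy M (exp (N1 - N2)) (exp N) :=
    hdec ▸ (semiconjBy_sub_add_of_re_mul_star_eq_zero hM hN2 hpar horth).exp_right
  rw [exp_of_re_eq_zero M hM, mul_add, mul_coe_eq_smul, mul_smul_comm, hconj.eq]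

theorem exp_mul_exp_of_imaginary (M N N1 N2 : ℍ[ℝ])
    (hM : M.re = 0) (hN : N.re = 0) (hM0 : M ≠ 0)
    (hdec : N = N1 + N2) (hpar : ∃ c : ℝ, N1 = c • M)
    (horth : (N2 * star M).re = 0) :
    NormedSpace.exp N * NormedSpace.exp M =
      Real.cos ‖M‖ • NormedSpace.exp N +
        (Real.sin ‖M‖ / ‖M‖) • (M * NormedSpace.exp (N1 - N2)) :=
  exp_mul_exp_of_imaginary_general M N N1 N2 hM hN hdec hpar horth
end

section
/- Fubini-type factorization for quaternion-valued Gamma integrals: for quaternions p, q with Re(p) > 0 and Re(q) > 0, Γ(p)·Γ(q) = lim_{R→∞} ∬_{T_R} e^{-x-y}·x^{p-1}·y^{q-1} dx dy, where T_R = {(x,y) : x ≥ 0, y ≥ 0, x + y ≤ R} and Γ(z) := ∫₀^∞ e^{-t}·t^{z-1} dt. -/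
/-!
The integrand factors as `f_p x * f_q y` with `f_z t = e^{-t} t^{z-1}`, and `‖f_z t‖` is the real
Gamma integrand at `Re z`, so the product is integrable on the closed quadrant. Left and right
multiplication by a fixed quaternion are continuous `ℝ`-linear maps and commute with the Bochner
integral, so Fubini factors the quadrant integral as `Γ(p) Γ(q)` without any commutativity. The
triangles `T_R` increase to the quadrant, so their integrals converge to it.
-/

open Quaternion NormedSpace MeasureTheory Filter Topology

/-- The quaternionic Gamma function for `Re z > 0`, as a Bochner integral. -/
noncomputable def qGamma (z : ℍ[ℝ]) : ℍ[ℝ] :=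
  ∫ t in Set.Ioi (0 : ℝ), Real.exp (-t) • NormedSpace.exp ((z - 1) * ((Real.log t : ℝ) : ℍ[ℝ]))

open Set

namespace MeasureTheory

variable {α β A : Type*} [MeasurableSpace α] [MeasurableSpace β] {μ : Measure α} {ν : Measure β}
  [SFinite μ] [SigmaFinite ν] [NormedRing A] [NormedSpace ℝ A] [IsScalarTower ℝ A A]
  [SMulCommClass ℝ A A] {f : α → A} {g : β → A}

theorem integral_prod_mul_of_integrable (hf : Integrable f μ) (hg : Integrable g ν) :
    ∫ z, f z.1 * g z.2 ∂μ.prod ν = (∫ x, f x ∂μ) * ∫ y, g y ∂ν := by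
  rw [integral_prod _ (hf.mul_prod hg)]
  simp_rw [integral_const_mul_of_integrable hg]
  exact integral_mul_const_of_integrable hf

theorem setIntegral_prod_mul_of_integrableOn {s : Set α} {t : Set β} (hf : IntegrableOn f s μ)
    (hg : IntegrableOn g t ν) :
    ∫ z in s ×ˢ t, f z.1 * g z.2 ∂μ.prod ν = (∫ x in s, f x ∂μ) * ∫ y in t, g y ∂ν := by
  rw [← Measure.prod_restrict]
  exact integral_prod_mul_of_integrable hf hg

end MeasureTheory

def triangle (R : ℝ) : Set (ℝ × ℝ) := {v | 0 ≤ v.1 ∧ 0 ≤ v.2 ∧ v.1 + v.2 ≤ R}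

theorem measurableSet_triangle (R : ℝ) : MeasurableSet (triangle R) :=
  (measurableSet_le measurable_const measurable_fst).inter
    ((measurableSet_le measurable_const measurable_snd).inter
      (measurableSet_le (measurable_fst.add measurable_snd) measurable_const))

theorem monotone_triangle : Monotone triangle :=
  fun _ _ hRS _ ⟨hx, hy, hxy⟩ => ⟨hx, hy, hxy.trans hRS⟩

theorem iUnion_triangle : ⋃ R, triangle R = Ici 0 ×ˢ Ici 0 := by
  ext v
  simp only [mem_iUnion, triangle, mem_ofPred_eq, mem_prod, mem_Ici]
  exact ⟨fun ⟨_, hx, hy, _⟩ => ⟨hx, hy⟩, fun ⟨hx, hy⟩ => ⟨v.1 + v.2, hx, hy, le_rfl⟩⟩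

theorem tendsto_setIntegral_triangle {E : Type*} [NormedAddCommGroup E] [NormedSpace ℝ E]
    {μ : Measure (ℝ × ℝ)} {f : ℝ × ℝ → E} (hf : IntegrableOn f (Ici 0 ×ˢ Ici 0) μ) :
    Tendsto (fun R => ∫ v in triangle R, f v ∂μ) atTop (𝓝 (∫ v in Ici 0 ×ˢ Ici 0, f v ∂μ)) := by
  rw [← iUnion_triangle] at hf ⊢
  exact tendsto_setIntegral_of_monotone measurableSet_triangle monotone_triangle hf

noncomputable def qGammaIntegrand (z : ℍ[ℝ]) (t : ℝ) : ℍ[ℝ] :=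
  Real.exp (-t) • exp ((z - 1) * ((Real.log t : ℝ) : ℍ[ℝ]))

theorem norm_exp_mul_coe_log (z : ℍ[ℝ]) {t : ℝ} (ht : 0 < t) :
    ‖exp ((z - 1) * ((Real.log t : ℝ) : ℍ[ℝ]))‖ = t ^ (z.re - 1) := by
  rw [Quaternion.norm_exp, mul_coe_eq_smul, re_smul, re_sub, re_one, ← Real.exp_eq_exp_ℝ,
    Real.norm_of_nonneg (Real.exp_pos _).le, Real.rpow_def_of_pos ht, smul_eq_mul, mul_comm]

theorem norm_qGammaIntegrand (z : ℍ[ℝ]) {t : ℝ} (ht : 0 < t) :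
    ‖qGammaIntegrand z t‖ = Real.exp (-t) * t ^ (z.re - 1) := by
  rw [qGammaIntegrand, norm_smul, Real.norm_of_nonneg (Real.exp_pos _).le,
    norm_exp_mul_coe_log z ht]

theorem continuousOn_qGammaIntegrand (z : ℍ[ℝ]) : ContinuousOn (qGammaIntegrand z) (Ioi 0) := by
  have hexp : Continuous (exp : ℍ[ℝ] → ℍ[ℝ]) :=
    continuous_iff_continuousAt.2 fun x => (exp_analytic (𝕂 := ℝ) x).continuousAt
  refine (Real.continuous_exp.comp continuous_neg).continuousOn.smul
    (hexp.comp_continuousOn (continuousOn_const.mul ?_))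
  exact continuous_coe.comp_continuousOn (Real.continuousOn_log.mono fun _ ht => ne_of_gt ht)

theorem integrableOn_Ici_qGammaIntegrand {z : ℍ[ℝ]} (hz : 0 < z.re) :
    IntegrableOn (qGammaIntegrand z) (Ici 0) := by
  rw [integrableOn_Ici_iff_integrableOn_Ioi]
  refine (Real.GammaIntegral_convergent hz).mono'
    ((continuousOn_qGammaIntegrand z).aestronglyMeasurable measurableSet_Ioi) ?_
  filter_upwards [ae_restrict_mem measurableSet_Ioi] with t ht
  rw [norm_qGammaIntegrand z ht]

theorem qGammaIntegrand_mul_qGammaIntegrand (p q : ℍ[ℝ]) (x y : ℝ) :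
    qGammaIntegrand p x * qGammaIntegrand q y = Real.exp (-(x + y)) •
      (exp ((p - 1) * ((Real.log x : ℝ) : ℍ[ℝ])) * exp ((q - 1) * ((Real.log y : ℝ) : ℍ[ℝ]))) := by
  rw [qGammaIntegrand, qGammaIntegrand, smul_mul_smul_comm, neg_add, Real.exp_add]

theorem gamma_mul_gamma_eq_lim_triangle_integral (p q : ℍ[ℝ])
    (hp : 0 < p.re) (hq : 0 < q.re) :
    Tendsto (fun R : ℝ =>
        ∫ v in {v : ℝ × ℝ | 0 ≤ v.1 ∧ 0 ≤ v.2 ∧ v.1 + v.2 ≤ R},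
          Real.exp (-(v.1 + v.2)) •
            (NormedSpace.exp ((p - 1) * ((Real.log v.1 : ℝ) : ℍ[ℝ])) *
              NormedSpace.exp ((q - 1) * ((Real.log v.2 : ℝ) : ℍ[ℝ]))))
      atTop (𝓝 (qGamma p * qGamma q)) := by
  have hf := integrableOn_Ici_qGammaIntegrand hp
  have hg := integrableOn_Ici_qGammaIntegrand hq
  have hprod : IntegrableOn (fun v : ℝ × ℝ => qGammaIntegrand p v.1 * qGammaIntegrand q v.2)
      (Ici 0 ×ˢ Ici 0) := by
    rw [IntegrableOn, Measure.volume_eq_prod, ← Measure.prod_restrict]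
    exact hf.mul_prod hg
  have hquadrant : ∫ v in Ici 0 ×ˢ Ici 0, qGammaIntegrand p v.1 * qGammaIntegrand q v.2 =
      qGamma p * qGamma q := by
    rw [Measure.volume_eq_prod, setIntegral_prod_mul_of_integrableOn hf hg,
      integral_Ici_eq_integral_Ioi, integral_Ici_eq_integral_Ioi]
    rfl
  have hlim := tendsto_setIntegral_triangle hprod
  rw [hquadrant] at hlim
  simpa only [triangle, qGammaIntegrand_mul_qGammaIntegrand] using hlim
end

section
/- Hankel's formula: 1/Γ(z) = (1/(2πi)) · ∮_ψ e^ζ · ζ^{-z} dζ for every complex z, where ψ is a contour starting at -∞ below the negative real axis, encircling 0 once counterclockwise, and returning to -∞ above the negative real axis, and ζ^{-z} takes its principal branch. -/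
/-!
In the logarithmic coordinate `ζ = e^w` the plane cut along `(-∞, 0]` becomes the strip
`|Im w| < π`, and the form `e^ζ ζ^{-z} dζ` becomes `k_z(w) dw` with the entire function
`k_z(w) = exp (e^w + (1 - z) w)`. Cauchy's theorem on the rectangle
`[log δ, log ρ] × [-π, π]` shows that the truncated Hankel integral equals the integral `C_z(ρ)`
over the circle `|ζ| = ρ`, so everything reduces to the limit of `C_z(ρ)` as `ρ → ∞`.

For `Re z < 1` the integral over a shrinking circle tends to `0`, which leaves
`C_z(ρ) = 2i sin (πz) ∫₀^ρ e^{-u} u^{-z} du → 2i sin (πz) Γ(1 - z) = 2πi / Γ(z)`.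
For `z = 1` the two edges cancel, so `∮ e^ζ / ζ dζ` does not depend on the radius, and letting
the radius tend to `0` gives `2πi`. Finally `k_z' = k_{z-1} + (1 - z) k_z`, so integrating along the circle gives `C_{z-1}(ρ) = (z - 1) C_z(ρ) + O(ρ^{1 - Re z} e^{-ρ})`,
which together with `Γ(z) = (z - 1) Γ(z - 1)` carries the formula from `z - 1` to `z`.
-/

open Filter Topology Real Set MeasureTheory
open Complex hiding exp log

noncomputable section

def hankelEdge (z : ℂ) (u : ℝ) : ℂ :=
  cexp (-(u : ℂ)) *
    (cexp (-z * ((Real.log u : ℂ) - π * I)) - cexp (-z * ((Real.log u : ℂ) + π * I)))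

/-- `e^ζ ζ^{-z} dζ/dw` at `ζ = e^w`, with the branch of `ζ^{-z}` determined by `w`. -/
def hankelKernel (z w : ℂ) : ℂ := cexp (cexp w) * cexp ((1 - z) * w)

/-- The integral of `e^ζ ζ^{-z} dζ` over the circle `|ζ| = e^s`, cut along the negative axis. -/
def hankelCircle (z : ℂ) (s : ℝ) : ℂ := ∫ θ in (-π)..π, I * hankelKernel z (s + θ * I)

end

lemma hasDerivAt_hankelKernel (z w : ℂ) :
    HasDerivAt (hankelKernel z) (hankelKernel (z - 1) w + (1 - z) * hankelKernel z w) w := by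
  have h := ((hasDerivAt_id w).cexp.cexp).mul ((hasDerivAt_id w).const_mul (1 - z)).cexp
  refine h.congr_deriv ?_
  rw [hankelKernel, hankelKernel, show (1 - (z - 1)) * w = w + (1 - z) * w by ring,
    Complex.exp_add]
  simp only [id]
  ring

lemma differentiable_hankelKernel (z : ℂ) : Differentiable ℂ (hankelKernel z) :=
  fun w => (hasDerivAt_hankelKernel z w).differentiableAt

@[fun_prop]
lemma continuous_hankelKernel (z : ℂ) : Continuous (hankelKernel z) :=
  (differentiable_hankelKernel z).continuous

lemma I_mul_hankelKernel_log_add {δ : ℝ} (hδ : 0 < δ) (z : ℂ) (θ : ℝ) :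
    I * hankelKernel z (Real.log δ + θ * I) =
      cexp (δ * cexp (θ * I)) * cexp (-z * (Real.log δ + θ * I)) * (δ * I * cexp (θ * I)) := by
  have hexp : cexp (Real.log δ + θ * I) = δ * cexp (θ * I) := by
    rw [Complex.exp_add, ← ofReal_exp, Real.exp_log hδ]
  rw [hankelKernel, hexp, sub_mul, one_mul, sub_eq_add_neg, Complex.exp_add, hexp, neg_mul]
  ring

lemma hankelKernel_add_pi_mul_I_sub (z : ℂ) (x : ℝ) :
    hankelKernel z (x + π * I) - hankelKernel z (x - π * I) =
      rexp x • hankelEdge z (rexp x) := by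
  have hplus : cexp (x + π * I) = -rexp x := by
    rw [Complex.exp_add, Complex.exp_pi_mul_I, ofReal_exp]; ring
  have hminus : cexp (x - π * I) = -rexp x := by
    rw [sub_eq_add_neg, Complex.exp_add, Complex.exp_neg, Complex.exp_pi_mul_I, ofReal_exp]
    ring
  rw [hankelKernel, hankelKernel,
    show (1 - z) * (x + π * I) = (x + π * I) + -z * (x + π * I) by ring,
    show (1 - z) * (x - π * I) = (x - π * I) + -z * (x - π * I) by ring,
    Complex.exp_add (x + π * I), Complex.exp_add (x - π * I), hplus, hminus, hankelEdge,
    Real.log_exp, real_smul, ofReal_exp]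
  ring

lemma hankelEdge_eq_sin_mul (z : ℂ) {u : ℝ} (hu : 0 < u) :
    hankelEdge z u = 2 * I * sin (π * z) * ((rexp (-u) : ℂ) * (u : ℂ) ^ (-z)) := by
  have h2sin : 2 * I * sin (π * z) = cexp (π * z * I) - cexp (-(π * z * I)) := by
    rw [← two_sinh, sinh_mul_I]; ring
  rw [h2sin, hankelEdge, cpow_def_of_ne_zero (by exact_mod_cast hu.ne'), ← ofReal_log hu.le,
    show -z * (Real.log u - π * I) = π * z * I + Real.log u * -z by ring,
    show -z * (Real.log u + π * I) = -(π * z * I) + Real.log u * -z by ring,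
    Complex.exp_add, Complex.exp_add]
  push_cast
  ring

lemma hankelCircle_sub_hankelCircle (z : ℂ) (s t : ℝ) :
    hankelCircle z t - hankelCircle z s =
      ∫ x in s..t, (hankelKernel z (x + π * I) - hankelKernel z (x - π * I)) := by
  have h := integral_boundary_rect_eq_zero_of_differentiableOn (hankelKernel z) (s - π * I)
    (t + π * I) (differentiable_hankelKernel z).differentiableOn
  simp only [sub_re, add_re, sub_im, add_im, ofReal_re, ofReal_im, mul_re, mul_im, I_re, I_im,
    mul_zero, mul_one, sub_zero, zero_sub, add_zero, zero_add, ofReal_neg, neg_mul,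
    ← sub_eq_add_neg, smul_eq_mul] at h
  rw [hankelCircle, hankelCircle, intervalIntegral.integral_const_mul,
    intervalIntegral.integral_const_mul, intervalIntegral.integral_sub
      (Continuous.intervalIntegrable (by fun_prop) _ _)
      (Continuous.intervalIntegrable (by fun_prop) _ _)]
  linear_combination h

lemma hankelCircle_log_sub_hankelCircle_log (z : ℂ) {a b : ℝ} (ha : 0 < a) (hb : 0 < b) :
    hankelCircle z (Real.log b) - hankelCircle z (Real.log a) = ∫ u in a..b, hankelEdge z u := by
  have h := intervalIntegral.integral_deriv_smul_comp_of_deriv_nonneg (g := hankelEdge z)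
    Real.continuous_exp.continuousOn (fun x _ => Real.hasDerivAt_exp x)
    (fun x _ => (Real.exp_pos x).le) (a := Real.log a) (b := Real.log b)
  rw [Real.exp_log ha, Real.exp_log hb] at h
  rw [hankelCircle_sub_hankelCircle, ← h]
  simp_rw [hankelKernel_add_pi_mul_I_sub, Function.comp_apply]

lemma hankelCircle_sub_one_add (z : ℂ) (s : ℝ) :
    hankelCircle (z - 1) s + (1 - z) * hankelCircle z s =
      hankelKernel z (s + π * I) - hankelKernel z (s - π * I) := by
  have hderiv (θ : ℝ) : HasDerivAt (fun θ : ℝ => hankelKernel z (s + θ * I))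
      (I * hankelKernel (z - 1) (s + θ * I) + (1 - z) * (I * hankelKernel z (s + θ * I))) θ := by
    have hline : HasDerivAt (fun θ : ℝ => (s : ℂ) + θ * I) I θ := by
      simpa using ((hasDerivAt_id (θ : ℂ)).comp_ofReal.mul_const I).const_add (s : ℂ)
    refine ((hasDerivAt_hankelKernel z _).comp θ hline).congr_deriv ?_
    ring
  rw [hankelCircle, hankelCircle, ← intervalIntegral.integral_const_mul,
    ← intervalIntegral.integral_add (Continuous.intervalIntegrable (by fun_prop) _ _)
      (Continuous.intervalIntegrable (by fun_prop) _ _),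
    intervalIntegral.integral_eq_sub_of_hasDerivAt (fun θ _ => hderiv θ)
      (Continuous.intervalIntegrable (by fun_prop) _ _),
    ofReal_neg, neg_mul, ← sub_eq_add_neg]

lemma sin_mul_Gamma_one_sub {z : ℂ} (hz : Gamma (1 - z) ≠ 0) :
    sin (π * z) * Gamma (1 - z) = π / Gamma z := by
  have hrefl := Gamma_mul_Gamma_one_sub z
  by_cases hsin : sin (π * z) = 0
  · rw [hsin, div_zero, mul_eq_zero] at hrefl
    rw [hsin, hrefl.resolve_right hz, div_zero, zero_mul]
  · have hΓ : Gamma z ≠ 0 :=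
      left_ne_zero_of_mul (hrefl ▸ div_ne_zero (by simp [pi_ne_zero]) hsin)
    rw [eq_div_iff hsin] at hrefl
    rw [eq_div_iff hΓ]
    linear_combination hrefl

lemma integrableOn_hankelEdge {z : ℂ} (hz : z.re < 1) : IntegrableOn (hankelEdge z) (Ioi 0) := by
  have hΓ := (GammaIntegral_convergent (s := 1 - z) (by simpa using hz)).const_mul
    (2 * I * sin (π * z))
  refine IntegrableOn.congr_fun hΓ (fun u hu => ?_) measurableSet_Ioi
  rw [hankelEdge_eq_sin_mul z hu, sub_sub_cancel_left]

lemma integral_hankelEdge {z : ℂ} (hz : z.re < 1) :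
    ∫ u in Ioi 0, hankelEdge z u = 2 * π * I * (Gamma z)⁻¹ := by
  have hΓ : Gamma (1 - z) = ∫ u in Ioi 0, (rexp (-u) : ℂ) * (u : ℂ) ^ (-z) := by
    rw [Complex.Gamma_eq_integral (by simpa using hz), GammaIntegral, sub_sub_cancel_left]
  rw [setIntegral_congr_fun measurableSet_Ioi (fun u hu => hankelEdge_eq_sin_mul z hu),
    integral_const_mul, ← hΓ, mul_assoc,
    sin_mul_Gamma_one_sub (Gamma_ne_zero_of_re_pos (by simpa using hz))]
  ring

lemma tendsto_smul_hankelEdge_atTop (z : ℂ) :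
    Tendsto (fun u : ℝ => u • hankelEdge z u) atTop (𝓝 0) := by
  have hlim := (tendsto_rpow_mul_exp_neg_mul_atTop_nhds_zero (1 - z.re) 1 one_pos).const_mul
    ‖2 * I * sin (π * z)‖
  rw [mul_zero] at hlim
  refine squeeze_zero_norm' ?_ hlim
  filter_upwards [eventually_gt_atTop 0] with u hu
  rw [hankelEdge_eq_sin_mul z hu, norm_smul, norm_mul _ ((rexp (-u) : ℂ) * _),
    norm_mul (rexp (-u) : ℂ), norm_cpow_eq_rpow_re_of_pos hu, neg_re, norm_real,
    Real.norm_of_nonneg hu.le, Real.norm_of_nonneg (Real.exp_pos _).le, sub_eq_add_neg,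
    Real.rpow_add hu, Real.rpow_one, neg_one_mul]
  exact le_of_eq (by ring)

lemma norm_hankelKernel_le (z : ℂ) (s : ℝ) {θ : ℝ} (hθ : |θ| ≤ π) :
    ‖hankelKernel z (s + θ * I)‖ ≤ rexp (rexp s + π * |z.im| + (1 - z.re) * s) := by
  have hre : (cexp (s + θ * I)).re ≤ rexp s :=
    (re_le_norm _).trans (by rw [Complex.norm_exp]; simp)
  have him : z.im * θ ≤ π * |z.im| := by
    calc z.im * θ ≤ |z.im| * |θ| := by rw [← abs_mul]; exact le_abs_self _
      _ ≤ π * |z.im| := by rw [mul_comm]; gcongr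
  rw [hankelKernel, norm_mul, Complex.norm_exp, Complex.norm_exp, ← Real.exp_add]
  have hlin : ((1 - z) * (s + θ * I)).re = (1 - z.re) * s + z.im * θ := by simp
  exact Real.exp_le_exp.mpr (by linarith)

lemma tendsto_hankelCircle_atBot_of_re_lt_one {z : ℂ} (hz : z.re < 1) :
    Tendsto (hankelCircle z) atBot (𝓝 0) := by
  have hexponent : Tendsto (fun s => rexp s + π * |z.im| + (1 - z.re) * s) atBot atBot :=
    (Real.tendsto_exp_atBot.add_const _).add_atBot
      (tendsto_id.const_mul_atBot (by linarith))
  have hlim := (Real.tendsto_exp_atBot.comp hexponent).mul_const (2 * π)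
  rw [zero_mul] at hlim
  refine squeeze_zero_norm (fun s => ?_) hlim
  have hbound : ∀ θ ∈ uIoc (-π) π,
      ‖I * hankelKernel z (s + θ * I)‖ ≤ rexp (rexp s + π * |z.im| + (1 - z.re) * s) := by
    intro θ hθ
    rw [uIoc_of_le (by linarith [pi_pos])] at hθ
    rw [norm_mul, norm_I, one_mul]
    exact norm_hankelKernel_le z s (abs_le.mpr ⟨hθ.1.le, hθ.2⟩)
  have h := intervalIntegral.norm_integral_le_of_norm_le_const hbound
  rwa [show |π - -π| = 2 * π by rw [sub_neg_eq_add, ← two_mul, abs_of_pos (by positivity)]] at h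

lemma hankelCircle_one (s : ℝ) : hankelCircle 1 s = 2 * π * I := by
  have hconst (t : ℝ) : hankelCircle 1 t = hankelCircle 1 s := by
    rw [← sub_eq_zero, hankelCircle_sub_hankelCircle]
    simp [hankelKernel_add_pi_mul_I_sub, hankelEdge_eq_sin_mul 1 (Real.exp_pos _), Complex.sin_pi]
  have hF : Continuous fun r : ℝ => ∫ θ in (-π)..π, I * cexp (r * cexp (θ * I)) :=
    intervalIntegral.continuous_parametric_intervalIntegral_of_continuous' (by fun_prop) _ _
  have hlim := (hF.tendsto 0).comp Real.tendsto_exp_atBot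
  simp only [ofReal_zero, zero_mul, Complex.exp_zero, mul_one, intervalIntegral.integral_const,
    sub_neg_eq_add, real_smul] at hlim
  rw [show ((π + π : ℝ) : ℂ) * I = 2 * π * I by push_cast; ring] at hlim
  refine tendsto_nhds_unique (tendsto_const_nhds.congr fun t => (hconst t).symm)
    (hlim.congr fun t => ?_)
  simp [hankelCircle, hankelKernel, Complex.exp_add]

lemma hankelCircle_log_eq_integral {z : ℂ} (hz : z.re < 1) {ρ : ℝ} (hρ : 0 < ρ) :
    hankelCircle z (Real.log ρ) = ∫ u in 0..ρ, hankelEdge z u := by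
  have hint : IntegrableOn (hankelEdge z) (uIcc 0 ρ) := by
    rw [uIcc_of_le hρ.le, integrableOn_Icc_iff_integrableOn_Ioc]
    exact (integrableOn_hankelEdge hz).mono_set Ioc_subset_Ioi_self
  have hprimitive : Tendsto (fun a => ∫ u in a..ρ, hankelEdge z u) (𝓝[>] 0)
      (𝓝 (∫ u in 0..ρ, hankelEdge z u)) :=
    ((intervalIntegral.continuousOn_primitive_interval_left hint) 0 left_mem_uIcc).tendsto.mono_left
      (nhdsWithin_le_of_mem (by rw [uIcc_of_le hρ.le]; exact Icc_mem_nhdsGT hρ))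
  have hlim :=
    ((tendsto_hankelCircle_atBot_of_re_lt_one hz).comp tendsto_log_nhdsGT_zero).add hprimitive
  rw [zero_add] at hlim
  refine tendsto_nhds_unique (tendsto_const_nhds.congr' ?_) hlim
  filter_upwards [self_mem_nhdsWithin] with a ha
  rw [Function.comp_apply, ← hankelCircle_log_sub_hankelCircle_log z ha hρ]
  ring

lemma tendsto_hankelCircle_of_re_lt_one {z : ℂ} (hz : z.re < 1) :
    Tendsto (hankelCircle z) atTop (𝓝 (2 * π * I * (Gamma z)⁻¹)) := by
  have h := intervalIntegral_tendsto_integral_Ioi 0 (integrableOn_hankelEdge hz) tendsto_id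
  rw [integral_hankelEdge hz] at h
  refine (h.comp tendsto_exp_atTop).congr fun s => ?_
  rw [Function.comp_apply, id, ← hankelCircle_log_eq_integral hz (exp_pos s), Real.log_exp]

lemma tendsto_hankelCircle_of_sub_one {z : ℂ} (hz : z ≠ 1)
    (h : Tendsto (hankelCircle (z - 1)) atTop (𝓝 (2 * π * I * (Gamma (z - 1))⁻¹))) :
    Tendsto (hankelCircle z) atTop (𝓝 (2 * π * I * (Gamma z)⁻¹)) := by
  have hz' : z - 1 ≠ 0 := sub_ne_zero.mpr hz
  have hboundary : Tendsto (fun s : ℝ => hankelKernel z (s + π * I) - hankelKernel z (s - π * I))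
      atTop (𝓝 0) := by
    simp_rw [hankelKernel_add_pi_mul_I_sub]
    exact (tendsto_smul_hankelEdge_atTop z).comp tendsto_exp_atTop
  have hlim := (h.sub hboundary).div_const (z - 1)
  rw [sub_zero] at hlim
  have hΓ : Gamma z = (z - 1) * Gamma (z - 1) := by simpa using Gamma_add_one (z - 1) hz'
  rw [hΓ, mul_inv,
    show 2 * π * I * ((z - 1)⁻¹ * (Gamma (z - 1))⁻¹) = 2 * π * I * (Gamma (z - 1))⁻¹ / (z - 1) by
      ring]
  refine hlim.congr fun s => ?_
  rw [← hankelCircle_sub_one_add, div_eq_iff hz']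
  ring

lemma tendsto_hankelCircle (z : ℂ) :
    Tendsto (hankelCircle z) atTop (𝓝 (2 * π * I * (Gamma z)⁻¹)) := by
  obtain ⟨n, hn⟩ := exists_nat_gt z.re
  induction n generalizing z with
  | zero => exact tendsto_hankelCircle_of_re_lt_one (by push_cast at hn; linarith)
  | succ n ih =>
    by_cases hz : z = 1
    · subst hz
      rw [funext hankelCircle_one, Complex.Gamma_one, inv_one, mul_one]
      exact tendsto_const_nhds
    · refine tendsto_hankelCircle_of_sub_one hz (ih _ ?_)
      push_cast at hn
      simp only [sub_re, one_re]
      linarith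

/-- Hankel's formula `1/Γ(z) = (1/(2πi)) ∮_ψ e^ζ ζ^{-z} dζ`, with the Hankel contour `ψ`
realized concretely: the lower edge of the cut `(-∞, -δ]` traversed inwards
(branch `ζ^{-z} = exp (-z (log u - iπ))`), the circle `|ζ| = δ` traversed
counterclockwise, and the upper edge traversed outwards
(branch `ζ^{-z} = exp (-z (log u + iπ))`), in the limit `ρ → ∞`. -/
theorem hankel_formula (z : ℂ) (δ : ℝ) (hδ : 0 < δ) :
    Tendsto (fun ρ : ℝ =>
        (∫ u in δ..ρ, Complex.exp (-(u : ℂ)) *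
            (Complex.exp (-z * ((Real.log u : ℂ) - Real.pi * Complex.I)) -
              Complex.exp (-z * ((Real.log u : ℂ) + Real.pi * Complex.I)))) +
          ∫ θ in (-Real.pi)..Real.pi,
            Complex.exp ((δ : ℂ) * Complex.exp (θ * Complex.I)) *
              Complex.exp (-z * ((Real.log δ : ℂ) + θ * Complex.I)) *
              ((δ : ℂ) * Complex.I * Complex.exp (θ * Complex.I)))
      atTop (𝓝 (2 * Real.pi * Complex.I * (Complex.Gamma z)⁻¹)) := by
  have hcircle : ∫ θ in (-π)..π, cexp (δ * cexp (θ * I)) * cexp (-z * (Real.log δ + θ * I)) *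
      (δ * I * cexp (θ * I)) = hankelCircle z (Real.log δ) :=
    intervalIntegral.integral_congr fun θ _ => (I_mul_hankelKernel_log_add hδ z θ).symm
  rw [hcircle]
  refine ((tendsto_hankelCircle z).comp tendsto_log_atTop).congr' ?_
  filter_upwards [eventually_gt_atTop 0] with ρ hρ
  rw [Function.comp_apply, ← sub_eq_iff_eq_add, hankelCircle_log_sub_hankelCircle_log z hδ hρ]
  rfl
end
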